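/- Let c = (c₁,c₂,c₃) ∈ ℝ³ with c₁ > -1, and let U be a C¹ solution of (★) on (-1,1) with lim_{x→-1⁺} U(x) = τ₁(c₁). Then for every ε > 0 there exist constants δ > 0 and C > 0 such that |U(x) - τ₁(c₁)| ≤ C·(1+x)^{min(√(1+c₁),1) - ε} for all x ∈ (-1,-1+δ). -/

import Mathlib

open Set Filter Real Topology

noncomputable section

/-- The Riccati-type ODE (★):
`(1-x²)U'(x) + 2x·U(x) + (1/2)U(x)² = c₁(1-x) + c₂(1+x) + c₃(1-x²)` at the point `x`. -/
def StarEq (c₁ c₂ c₃ : ℝ) (U : ℝ → ℝ) (x : ℝ) : Prop :=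
  (1 - x ^ 2) * deriv U x + 2 * x * U x + (1 / 2) * (U x) ^ 2
    = c₁ * (1 - x) + c₂ * (1 + x) + c₃ * (1 - x ^ 2)

/-- `U` is a C¹ solution of (★) on the set `s`. -/
def IsSolOn (c₁ c₂ c₃ : ℝ) (U : ℝ → ℝ) (s : Set ℝ) : Prop :=
  ContDiffOn ℝ 1 U s ∧ ∀ x ∈ s, StarEq c₁ c₂ c₃ U x

/-- `c̄₃(c₁,c₂) = -(1/2)(√(1+c₁)+√(1+c₂))(√(1+c₁)+√(1+c₂)+2)`. -/
def cbar (c₁ c₂ : ℝ) : ℝ :=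
  -(1 / 2) * (Real.sqrt (1 + c₁) + Real.sqrt (1 + c₂)) *
    (Real.sqrt (1 + c₁) + Real.sqrt (1 + c₂) + 2)

/-- `J = {c ∈ ℝ³ : c₁ ≥ -1, c₂ ≥ -1, c₃ ≥ c̄₃(c₁,c₂)}`. -/
def Jset : Set (ℝ × ℝ × ℝ) := {c | -1 ≤ c.1 ∧ -1 ≤ c.2.1 ∧ cbar c.1 c.2.1 ≤ c.2.2}

def tau1 (c₁ : ℝ) : ℝ := 2 - 2 * Real.sqrt (1 + c₁)
def tau2 (c₁ : ℝ) : ℝ := 2 + 2 * Real.sqrt (1 + c₁)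
def tau1' (c₂ : ℝ) : ℝ := -2 - 2 * Real.sqrt (1 + c₂)
def tau2' (c₂ : ℝ) : ℝ := -2 + 2 * Real.sqrt (1 + c₂)

/-!
Write `s = √(1 + c₁)` and `v = U - τ₁`. Since `τ₁` is the smaller root of `τ² - 4τ - 4c₁ = 0`,
(★) reads `(1 + x)(1 - x) v' = (1 + x) L(x) + (2s - 2(1 + x)) v - v² / 2` with
`L = forcingTerm` bounded, so near `x = -1` the linear term `2s v` dominates while `v` is small.
For `0 < α < s` with `α ≤ 1` and `C` large, `v ∓ C(1 + x)^α` is then increasing (resp.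
decreasing) wherever `v` reaches the barrier `±C(1 + x)^α`; as `v` lies strictly between the
barriers at one point `b`, it stays between them on `(-1, b)`. Lowering the exponent
`min s 1 - ε` into `(0, min s 1)` only weakens the bound.
-/

theorem nonpos_of_deriv_pos_of_nonneg {F : ℝ → ℝ} {a b : ℝ} (hab : a ≤ b)
    (hF : ContinuousOn F (Icc a b))
    (hF' : ∀ x ∈ Ico a b, 0 ≤ F x → ∃ d, 0 < d ∧ HasDerivAt F d x)
    (hb : F b ≤ 0) : F a ≤ 0 := by
  by_contra! ha
  set S := Icc a b ∩ F ⁻¹' Iic 0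
  have hSne : S.Nonempty := ⟨b, right_mem_Icc.2 hab, hb⟩
  have hSbdd : BddBelow S := ⟨a, fun x hx => hx.1.1⟩
  obtain ⟨⟨-, hx₁b⟩, hFx₁⟩ : sInf S ∈ S :=
    (hF.preimage_isClosed_of_isClosed isClosed_Icc isClosed_Iic).csInf_mem hSne hSbdd
  have hpos : ∀ x ∈ Ico a (sInf S), 0 < F x := fun x hx => lt_of_not_ge fun hFx =>
    (csInf_le hSbdd ⟨⟨hx.1, hx.2.le.trans hx₁b⟩, hFx⟩).not_gt hx.2
  have hax₁ : a < sInf S := lt_of_le_of_ne (le_csInf hSne fun x hx => hx.1.1) fun h =>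
    (h ▸ hFx₁ : F a ≤ 0).not_gt ha
  have hmono : StrictMonoOn F (Icc a (sInf S)) :=
    strictMonoOn_of_deriv_pos (convex_Icc _ _) (hF.mono (Icc_subset_Icc_right hx₁b)) fun x hx => by
      rw [interior_Icc] at hx
      obtain ⟨d, hd, hFd⟩ := hF' x ⟨hx.1.le, hx.2.trans_le hx₁b⟩ (hpos x ⟨hx.1.le, hx.2⟩).le
      rwa [hFd.deriv]
  exact lt_asymm ha ((hmono (left_mem_Icc.2 hax₁.le) (right_mem_Icc.2 hax₁.le) hax₁).trans_le hFx₁)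

theorem div_mul_sub_div_pos {t u N a : ℝ} (ht : 0 < t) (hu : 0 < u) (h : a * u < N) :
    0 < N / (t * u) - a / t := by
  have : N / (t * u) - a / t = (N - a * u) / (t * u) := by field_simp
  rw [this]
  exact div_pos (by linarith) (by positivity)

theorem hasDerivAt_const_mul_one_add_rpow (C α : ℝ) {x : ℝ} (hx : 0 < 1 + x) :
    HasDerivAt (fun y => C * (1 + y) ^ α) (C * α * (1 + x) ^ α / (1 + x)) x := by
  refine ((((hasDerivAt_id x).const_add 1).rpow_const (Or.inl hx.ne')).const_mul C).congr_deriv ?_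
  simp only [id]
  rw [Real.rpow_sub hx, Real.rpow_one]
  ring

theorem barrier_upper_ineq {s α C r v w x : ℝ} (hα : 0 < α) (hx : -1 < x)
    (hxs : 1 + x ≤ (s - α) / 4) (hC : 0 ≤ C) (hw : 0 ≤ w) (hr : |r| < (s - α) * C * w)
    (hv : C * w ≤ v) (hvs : v ≤ s - α) :
    C * α * w * (1 - x) < r + (2 * s - 2 * (1 + x)) * v - v ^ 2 / 2 := by
  have hCw : 0 ≤ C * w := mul_nonneg hC hw
  have hlin : (s + α) * (C * w) ≤ (2 * s - 2 * (1 + x)) * v - v ^ 2 / 2 := by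
    nlinarith [mul_nonneg (hCw.trans hv) (by linarith : 0 ≤ s - α - 2 * (1 + x) - v / 2),
      mul_nonneg (by linarith : 0 ≤ s + α) (sub_nonneg.2 hv)]
  have hbar : C * α * w * (1 - x) ≤ 2 * α * (C * w) := by
    nlinarith [mul_nonneg (mul_nonneg hCw hα.le) (by linarith : 0 ≤ 1 + x)]
  linarith [neg_abs_le r]

theorem barrier_lower_ineq {s α C r v w x : ℝ} (hα : 0 < α) (hx : -1 < x)
    (hxs : 1 + x ≤ (s - α) / 4) (hC : 0 ≤ C) (hw : 0 ≤ w) (hr : |r| < (s - α) * C * w)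
    (hv : v ≤ -(C * w)) :
    C * α * w * (1 - x) < -(r + (2 * s - 2 * (1 + x)) * v - v ^ 2 / 2) := by
  have hCw : 0 ≤ C * w := mul_nonneg hC hw
  have hlin : (s + α) * (C * w) ≤ -((2 * s - 2 * (1 + x)) * v) := by
    nlinarith [mul_nonneg (by linarith : 0 ≤ 2 * s - 2 * (1 + x)) (by linarith : 0 ≤ -v - C * w)]
  have hbar : C * α * w * (1 - x) ≤ 2 * α * (C * w) := by
    nlinarith [mul_nonneg (mul_nonneg hCw hα.le) (by linarith : 0 ≤ 1 + x)]
  linarith [le_abs_self r, sq_nonneg v]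

section Barrier

variable {v r : ℝ → ℝ} {s α C a b : ℝ}

theorem le_barrier_of_hasDerivAt (hα : 0 < α) (hC : 0 < C) (ha : -1 < a) (hab : a ≤ b)
    (hb : b ≤ 1) (hbs : 1 + b ≤ (s - α) / 4) (hv : ContinuousOn v (Icc a b))
    (hv' : ∀ y ∈ Ico a b, HasDerivAt v
      ((r y + (2 * s - 2 * (1 + y)) * v y - v y ^ 2 / 2) / ((1 + y) * (1 - y))) y)
    (hr : ∀ y ∈ Ico a b, |r y| < (s - α) * C * (1 + y) ^ α)
    (hvs : ∀ y ∈ Ico a b, v y ≤ s - α) (hvb : v b ≤ C * (1 + b) ^ α) :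
    v a ≤ C * (1 + a) ^ α := by
  have hφ : ∀ y ∈ Icc a b,
      HasDerivAt (fun y => C * (1 + y) ^ α) (C * α * (1 + y) ^ α / (1 + y)) y :=
    fun y hy => hasDerivAt_const_mul_one_add_rpow C α (by linarith [hy.1])
  have hF' : ∀ y ∈ Ico a b, 0 ≤ v y - C * (1 + y) ^ α →
      ∃ d, 0 < d ∧ HasDerivAt (fun y => v y - C * (1 + y) ^ α) d y := by
    intro y hy hFy
    refine ⟨_, div_mul_sub_div_pos (by linarith [hy.1]) (by linarith [hy.2]) ?_,
      (hv' y hy).sub (hφ y (Ico_subset_Icc_self hy))⟩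
    exact barrier_upper_ineq hα (by linarith [hy.1]) (by linarith [hy.2]) hC.le
      (Real.rpow_nonneg (by linarith [hy.1]) _) (hr y hy) (by linarith) (hvs y hy)
  have h : v a - C * (1 + a) ^ α ≤ 0 :=
    nonpos_of_deriv_pos_of_nonneg (F := fun y => v y - C * (1 + y) ^ α) hab
      (hv.sub fun y hy => (hφ y hy).continuousAt.continuousWithinAt) hF' (sub_nonpos.2 hvb)
  linarith

theorem neg_barrier_le_of_hasDerivAt (hα : 0 < α) (hC : 0 < C) (ha : -1 < a) (hab : a ≤ b)
    (hb : b ≤ 1) (hbs : 1 + b ≤ (s - α) / 4) (hv : ContinuousOn v (Icc a b))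
    (hv' : ∀ y ∈ Ico a b, HasDerivAt v
      ((r y + (2 * s - 2 * (1 + y)) * v y - v y ^ 2 / 2) / ((1 + y) * (1 - y))) y)
    (hr : ∀ y ∈ Ico a b, |r y| < (s - α) * C * (1 + y) ^ α)
    (hvb : -(C * (1 + b) ^ α) ≤ v b) :
    -(C * (1 + a) ^ α) ≤ v a := by
  have hφ : ∀ y ∈ Icc a b,
      HasDerivAt (fun y => C * (1 + y) ^ α) (C * α * (1 + y) ^ α / (1 + y)) y :=
    fun y hy => hasDerivAt_const_mul_one_add_rpow C α (by linarith [hy.1])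
  have hF' : ∀ y ∈ Ico a b, 0 ≤ -(v y + C * (1 + y) ^ α) →
      ∃ d, 0 < d ∧ HasDerivAt (fun y => -(v y + C * (1 + y) ^ α)) d y := by
    intro y hy hFy
    refine ⟨_, ?_, ((hv' y hy).add (hφ y (Ico_subset_Icc_self hy))).neg⟩
    have := div_mul_sub_div_pos (t := 1 + y) (u := 1 - y) (by linarith [hy.1]) (by linarith [hy.2])
      (barrier_lower_ineq hα (by linarith [hy.1]) (by linarith [hy.2]) hC.le
        (Real.rpow_nonneg (by linarith [hy.1]) _) (hr y hy)
        (by linarith : v y ≤ -(C * (1 + y) ^ α)))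
    linarith [neg_div ((1 + y) * (1 - y)) (r y + (2 * s - 2 * (1 + y)) * v y - v y ^ 2 / 2)]
  have h : -(v a + C * (1 + a) ^ α) ≤ 0 :=
    nonpos_of_deriv_pos_of_nonneg (F := fun y => -(v y + C * (1 + y) ^ α)) hab
      (hv.add fun y hy => (hφ y hy).continuousAt.continuousWithinAt).neg hF' (by linarith)
  linarith

end Barrier

def forcingTerm (c₁ c₂ c₃ x : ℝ) : ℝ := c₂ - c₁ + c₃ * (1 - x) - 2 * tau1 c₁

section Solution

variable {c₁ c₂ c₃ : ℝ} {U : ℝ → ℝ}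

theorem star_rhs_eq_forcingTerm (hc₁ : -1 ≤ c₁) (x u : ℝ) :
    c₁ * (1 - x) + c₂ * (1 + x) + c₃ * (1 - x ^ 2) - 2 * x * u - (1 / 2) * u ^ 2
      = (1 + x) * forcingTerm c₁ c₂ c₃ x + (2 * √(1 + c₁) - 2 * (1 + x)) * (u - tau1 c₁)
        - (u - tau1 c₁) ^ 2 / 2 := by
  have hs : √(1 + c₁) ^ 2 = 1 + c₁ := Real.sq_sqrt (by linarith)
  unfold forcingTerm tau1
  linear_combination (-2) * hs

theorem IsSolOn.hasDerivAt {s : Set ℝ} (hU : IsSolOn c₁ c₂ c₃ U s) (hs : IsOpen s) {x : ℝ}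
    (hx : x ∈ s) (hx1 : (1 + x) * (1 - x) ≠ 0) :
    HasDerivAt U ((c₁ * (1 - x) + c₂ * (1 + x) + c₃ * (1 - x ^ 2) - 2 * x * U x
      - (1 / 2) * U x ^ 2) / ((1 + x) * (1 - x))) x := by
  have hstar : StarEq c₁ c₂ c₃ U x := hU.2 x hx
  refine ((hU.1.differentiableOn one_ne_zero x hx).differentiableAt
    (hs.mem_nhds hx)).hasDerivAt.congr_deriv ?_
  rw [eq_div_iff hx1]
  unfold StarEq at hstar
  linear_combination hstar

theorem IsSolOn.hasDerivAt_sub_tau1 (hc₁ : -1 ≤ c₁) (hU : IsSolOn c₁ c₂ c₃ U (Ioo (-1) 1))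
    {x : ℝ} (hx : x ∈ Ioo (-1 : ℝ) 1) :
    HasDerivAt (fun y => U y - tau1 c₁)
      (((1 + x) * forcingTerm c₁ c₂ c₃ x + (2 * √(1 + c₁) - 2 * (1 + x)) * (U x - tau1 c₁)
        - (U x - tau1 c₁) ^ 2 / 2) / ((1 + x) * (1 - x))) x := by
  have hx1 : (1 + x) * (1 - x) ≠ 0 := (mul_pos (by linarith [hx.1]) (by linarith [hx.2])).ne'
  have h := (hU.hasDerivAt isOpen_Ioo hx hx1).sub_const (tau1 c₁)
  rwa [star_rhs_eq_forcingTerm hc₁] at h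

theorem IsSolOn.abs_sub_tau1_le_of_barrier (hc₁ : -1 ≤ c₁) (hU : IsSolOn c₁ c₂ c₃ U (Ioo (-1) 1))
    {α C b : ℝ} (hα : 0 < α) (hC : 0 < C) (hb : b < 1) (hbs : 1 + b ≤ (√(1 + c₁) - α) / 4)
    (hclose : ∀ y ∈ Ioc (-1 : ℝ) b, |U y - tau1 c₁| ≤ √(1 + c₁) - α)
    (hforce : ∀ y ∈ Ioo (-1 : ℝ) b,
      |(1 + y) * forcingTerm c₁ c₂ c₃ y| < (√(1 + c₁) - α) * C * (1 + y) ^ α)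
    (hend : √(1 + c₁) - α < C * (1 + b) ^ α) {x : ℝ} (hx : x ∈ Ioo (-1 : ℝ) b) :
    |U x - tau1 c₁| ≤ C * (1 + x) ^ α := by
  have hIcc : Icc x b ⊆ Ioo (-1) 1 := fun y hy => ⟨hx.1.trans_le hy.1, hy.2.trans_lt hb⟩
  have hIco : Ico x b ⊆ Ioc (-1) b := fun y hy => ⟨hx.1.trans_le hy.1, hy.2.le⟩
  have hv : ContinuousOn (fun y => U y - tau1 c₁) (Icc x b) :=
    (hU.1.continuousOn.mono hIcc).sub continuousOn_const
  have hv' (y : ℝ) (hy : y ∈ Ico x b) := hU.hasDerivAt_sub_tau1 hc₁ (hIcc (Ico_subset_Icc_self hy))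
  have hr (y : ℝ) (hy : y ∈ Ico x b) := hforce y ⟨hx.1.trans_le hy.1, hy.2⟩
  have hvb := abs_le.1 ((hclose b ⟨hx.1.trans hx.2, le_rfl⟩).trans hend.le)
  refine abs_le.2 ⟨?_, ?_⟩
  · exact neg_barrier_le_of_hasDerivAt (v := fun y => U y - tau1 c₁)
      (r := fun y => (1 + y) * forcingTerm c₁ c₂ c₃ y) hα hC hx.1 hx.2.le hb.le hbs hv hv' hr hvb.1
  · exact le_barrier_of_hasDerivAt (v := fun y => U y - tau1 c₁)
      (r := fun y => (1 + y) * forcingTerm c₁ c₂ c₃ y) hα hC hx.1 hx.2.le hb.le hbs hv hv' hr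
      (fun y hy => (le_abs_self _).trans (hclose y (hIco hy))) hvb.2

theorem abs_forcingTerm_le {x : ℝ} (hx : x ∈ Icc (-1 : ℝ) 1) :
    |forcingTerm c₁ c₂ c₃ x| ≤ |c₂ - c₁ - 2 * tau1 c₁| + 2 * |c₃| := by
  have h1x : |1 - x| ≤ 2 := abs_le.2 ⟨by linarith [hx.2], by linarith [hx.1]⟩
  calc |forcingTerm c₁ c₂ c₃ x| = |(c₂ - c₁ - 2 * tau1 c₁) + c₃ * (1 - x)| := by
        unfold forcingTerm; ring_nf
    _ ≤ |c₂ - c₁ - 2 * tau1 c₁| + |c₃| * |1 - x| := by rw [← abs_mul]; exact abs_add_le _ _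
    _ ≤ |c₂ - c₁ - 2 * tau1 c₁| + 2 * |c₃| := by nlinarith [abs_nonneg c₃]

theorem IsSolOn.exists_abs_sub_tau1_le_rpow (h1 : -1 < c₁) (hU : IsSolOn c₁ c₂ c₃ U (Ioo (-1) 1))
    (hlim : Tendsto U (𝓝[>] (-1)) (𝓝 (tau1 c₁))) {α : ℝ} (hα : 0 < α) (hαs : α < √(1 + c₁))
    (hα1 : α ≤ 1) :
    ∃ δ, 0 < δ ∧ δ ≤ 1 ∧ ∃ C, 0 < C ∧
      ∀ x ∈ Ioo (-1 : ℝ) (-1 + δ), |U x - tau1 c₁| ≤ C * (1 + x) ^ α := by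
  set γ := √(1 + c₁) - α
  have hγ : 0 < γ := sub_pos.2 hαs
  obtain ⟨u, hu, hclose⟩ :=
    mem_nhdsGT_iff_exists_Ioc_subset.1 (hlim (Metric.closedBall_mem_nhds _ hγ))
  set δ := min (u + 1) (min 1 (γ / 4))
  have hδ : 0 < δ := lt_min (by linarith [mem_Ioi.1 hu]) (lt_min one_pos (by positivity))
  have hδ1 : δ ≤ 1 := (min_le_right _ _).trans (min_le_left _ _)
  set K := |c₂ - c₁ - 2 * tau1 c₁| + 2 * |c₃|
  set C := K / γ + γ / δ ^ α + 1
  have hδα : 0 < δ ^ α := Real.rpow_pos_of_pos hδ α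
  have hK : K < γ * C := by
    have : γ * C = K + γ ^ 2 / δ ^ α + γ := by simp only [C]; field_simp
    have : 0 ≤ γ ^ 2 / δ ^ α := by positivity
    linarith
  refine ⟨δ, hδ, hδ1, C, by positivity, fun x hx => hU.abs_sub_tau1_le_of_barrier h1.le hα
    (by positivity) (by linarith) ?_ (fun y hy => hclose ⟨hy.1, ?_⟩) ?_ ?_ hx⟩
  · linarith [((min_le_right _ _).trans (min_le_right _ _) : δ ≤ γ / 4)]
  · linarith [hy.2, (min_le_left _ _ : δ ≤ u + 1)]
  · intro y hy
    have ht : 0 < 1 + y := by linarith [hy.1]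
    have htα : 1 + y ≤ (1 + y) ^ α := by
      simpa using Real.rpow_le_rpow_of_exponent_ge ht (by linarith [hy.2]) hα1
    have hL : |forcingTerm c₁ c₂ c₃ y| ≤ K := abs_forcingTerm_le ⟨hy.1.le, by linarith [hy.2]⟩
    calc |(1 + y) * forcingTerm c₁ c₂ c₃ y| = (1 + y) * |forcingTerm c₁ c₂ c₃ y| := by
          rw [abs_mul, abs_of_pos ht]
      _ ≤ (1 + y) ^ α * K := mul_le_mul htα hL (abs_nonneg _) (by positivity)
      _ < γ * C * (1 + y) ^ α := by
          rw [mul_comm]; exact mul_lt_mul_of_pos_right hK (Real.rpow_pos_of_pos ht α)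
  · have : C * δ ^ α = K / γ * δ ^ α + γ + δ ^ α := by simp only [C]; field_simp
    have : 0 ≤ K / γ * δ ^ α := by positivity
    rw [add_neg_cancel_left]
    linarith

end Solution

/-- Hölder-type rate of convergence to `τ₁(c₁)` at `-1` when `c₁ > -1`. -/
theorem statement18 (c₁ c₂ c₃ : ℝ) (h1 : -1 < c₁) (U : ℝ → ℝ)
    (hU : IsSolOn c₁ c₂ c₃ U (Ioo (-1 : ℝ) 1))
    (hlim : Tendsto U (𝓝[>] (-1 : ℝ)) (𝓝 (tau1 c₁))) :
    ∀ ε : ℝ, 0 < ε → ∃ δ : ℝ, 0 < δ ∧ ∃ C : ℝ, 0 < C ∧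
      ∀ x ∈ Ioo (-1 : ℝ) (-1 + δ),
        |U x - tau1 c₁| ≤ C * (1 + x) ^ (min (Real.sqrt (1 + c₁)) 1 - ε) := by
  intro ε hε
  have hm : 0 < min √(1 + c₁) 1 := lt_min (Real.sqrt_pos.2 (by linarith)) one_pos
  set α := max (min √(1 + c₁) 1 - ε) (min √(1 + c₁) 1 / 2)
  have hαm : α < min √(1 + c₁) 1 := max_lt (by linarith) (half_lt_self hm)
  obtain ⟨δ, hδ, hδ1, C, hC, hbound⟩ := hU.exists_abs_sub_tau1_le_rpow h1 hlim
    (lt_max_of_lt_right (half_pos hm)) (hαm.trans_le (min_le_left _ _))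
    (hαm.le.trans (min_le_right _ _))
  refine ⟨δ, hδ, C, hC, fun x hx => (hbound x hx).trans (mul_le_mul_of_nonneg_left ?_ hC.le)⟩
  exact Real.rpow_le_rpow_of_exponent_ge (by linarith [hx.1]) (by linarith [hx.2])
    (le_max_left _ _)
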